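/- Let A, Λ ∈ ℝ^{N×N} and E, Γ ∈ ℝ^{M×M} be diagonal with A_{ii} = (1−Λᵢ)Âᵢ, E_{jj} = (1−Γⱼ)Êⱼ, where Âᵢ, Êⱼ ∈ [0,1) and Λᵢ, Γⱼ ∈ (0,1). Let B ∈ ℝ^{N×M} be nonnegative with row sums (1−Λᵢ)(1−Âᵢ) and C ∈ ℝ^{M×N} nonnegative with row sums (1−Γⱼ)(1−Êⱼ). Then K := (I−E)⁻¹ C (I−A)⁻¹ B satisfies ‖K‖_∞ < 1, and hence I − K is invertible. -/

import Mathlib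

theorem loop_gain_norm_lt_one (N M : ℕ)
    (Ahat Λv : Fin N → ℝ) (Ehat Γv : Fin M → ℝ)
    (A : Matrix (Fin N) (Fin N) ℝ) (E : Matrix (Fin M) (Fin M) ℝ)
    (hA : A = Matrix.diagonal (fun i => (1 - Λv i) * Ahat i))
    (hE : E = Matrix.diagonal (fun j => (1 - Γv j) * Ehat j))
    (hAhat : ∀ i, 0 ≤ Ahat i ∧ Ahat i < 1) (hΛ : ∀ i, 0 < Λv i ∧ Λv i < 1)
    (hEhat : ∀ j, 0 ≤ Ehat j ∧ Ehat j < 1) (hΓ : ∀ j, 0 < Γv j ∧ Γv j < 1)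
    (B : Matrix (Fin N) (Fin M) ℝ) (hBpos : ∀ i j, 0 ≤ B i j)
    (hBrow : ∀ i, ∑ j, B i j = (1 - Λv i) * (1 - Ahat i))
    (C : Matrix (Fin M) (Fin N) ℝ) (hCpos : ∀ j i, 0 ≤ C j i)
    (hCrow : ∀ j, ∑ i, C j i = (1 - Γv j) * (1 - Ehat j)) :
    (⨆ j, ∑ k, |((1 - E)⁻¹ * C * (1 - A)⁻¹ * B) j k|) < 1 ∧
    IsUnit (1 - (1 - E)⁻¹ * C * (1 - A)⁻¹ * B) := by
  set dA : Fin N → ℝ := fun i => 1 - (1 - Λv i) * Ahat i with hdA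
  set dE : Fin M → ℝ := fun j => 1 - (1 - Γv j) * Ehat j with hdE
  have hdApos : ∀ i, 0 < dA i := fun i => by
    have h1 := hAhat i; have h2 := hΛ i
    simp only [hdA]; nlinarith [h1.1, h1.2, h2.1, h2.2]
  have hdEpos : ∀ j, 0 < dE j := fun j => by
    have h1 := hEhat j; have h2 := hΓ j
    simp only [hdE]; nlinarith [h1.1, h1.2, h2.1, h2.2]
  have hAkey : ∀ i, (1 - Λv i) * (1 - Ahat i) ≤ dA i := fun i => by
    have h2 := hΛ i; simp only [hdA]; nlinarith [h2.1, (hAhat i).1]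
  have hEkey : ∀ j, (1 - Γv j) * (1 - Ehat j) < dE j := fun j => by
    have h2 := hΓ j; simp only [hdE]; nlinarith [h2.1, (hEhat j).1]
  have h1A : (1 - A)⁻¹ = Matrix.diagonal (fun i => (dA i)⁻¹) := by
    rw [hA, show (1 : Matrix (Fin N) (Fin N) ℝ) = Matrix.diagonal (fun _ => (1:ℝ)) from
      Matrix.diagonal_one.symm, Matrix.diagonal_sub]
    refine Matrix.inv_eq_right_inv ?_
    rw [Matrix.diagonal_mul_diagonal, ← Matrix.diagonal_one]
    exact congrArg Matrix.diagonal (funext fun i => mul_inv_cancel₀ (hdApos i).ne')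
  have h1E : (1 - E)⁻¹ = Matrix.diagonal (fun j => (dE j)⁻¹) := by
    rw [hE, show (1 : Matrix (Fin M) (Fin M) ℝ) = Matrix.diagonal (fun _ => (1:ℝ)) from
      Matrix.diagonal_one.symm, Matrix.diagonal_sub]
    refine Matrix.inv_eq_right_inv ?_
    rw [Matrix.diagonal_mul_diagonal, ← Matrix.diagonal_one]
    exact congrArg Matrix.diagonal (funext fun j => mul_inv_cancel₀ (hdEpos j).ne')
  set K := (1 - E)⁻¹ * C * (1 - A)⁻¹ * B with hK
  have hKentry : ∀ j k, K j k = ∑ i, (dE j)⁻¹ * C j i * (dA i)⁻¹ * B i k := by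
    intro j k
    rw [hK, h1A, h1E, Matrix.mul_apply]
    refine Finset.sum_congr rfl fun i _ => ?_
    rw [Matrix.mul_diagonal, Matrix.diagonal_mul]
  have hKnonneg : ∀ j k, 0 ≤ K j k := by
    intro j k
    rw [hKentry]
    refine Finset.sum_nonneg fun i _ => ?_
    exact mul_nonneg (mul_nonneg (mul_nonneg (inv_nonneg.mpr (hdEpos j).le) (hCpos j i))
      (inv_nonneg.mpr (hdApos i).le)) (hBpos i k)
  have hrow : ∀ j, ∑ k, |K j k| < 1 := by
    intro j
    have hrw : ∑ k, |K j k| = ∑ i, (dE j)⁻¹ * C j i * (dA i)⁻¹ * ((1 - Λv i) * (1 - Ahat i)) := by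
      calc ∑ k, |K j k| = ∑ k, K j k := by
            refine Finset.sum_congr rfl fun k _ => abs_of_nonneg (hKnonneg j k)
        _ = ∑ k, ∑ i, (dE j)⁻¹ * C j i * (dA i)⁻¹ * B i k := by
            refine Finset.sum_congr rfl fun k _ => hKentry j k
        _ = ∑ i, ∑ k, (dE j)⁻¹ * C j i * (dA i)⁻¹ * B i k := Finset.sum_comm
        _ = ∑ i, (dE j)⁻¹ * C j i * (dA i)⁻¹ * ((1 - Λv i) * (1 - Ahat i)) := by
            refine Finset.sum_congr rfl fun i _ => ?_
            rw [← Finset.mul_sum, hBrow]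
    rw [hrw]
    have hb : ∑ i, (dE j)⁻¹ * C j i * (dA i)⁻¹ * ((1 - Λv i) * (1 - Ahat i))
        ≤ ∑ i, (dE j)⁻¹ * C j i := by
      refine Finset.sum_le_sum fun i _ => ?_
      have h1 : (dA i)⁻¹ * ((1 - Λv i) * (1 - Ahat i)) ≤ 1 := by
        rw [inv_mul_eq_div, div_le_one (hdApos i)]
        exact hAkey i
      have h2 : 0 ≤ (dE j)⁻¹ * C j i :=
        mul_nonneg (inv_nonneg.mpr (hdEpos j).le) (hCpos j i)
      calc (dE j)⁻¹ * C j i * (dA i)⁻¹ * ((1 - Λv i) * (1 - Ahat i))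
          = (dE j)⁻¹ * C j i * ((dA i)⁻¹ * ((1 - Λv i) * (1 - Ahat i))) := by ring
        _ ≤ (dE j)⁻¹ * C j i * 1 := mul_le_mul_of_nonneg_left h1 h2
        _ = (dE j)⁻¹ * C j i := mul_one _
    refine hb.trans_lt ?_
    rw [← Finset.mul_sum, hCrow, inv_mul_eq_div, div_lt_one (hdEpos j)]
    exact hEkey j
  constructor
  · rcases isEmpty_or_nonempty (Fin M) with hM | hM
    · rw [iSup_of_empty']
      simpa [Real.sSup_empty] using one_pos
    · obtain ⟨j0, hj0⟩ := Finite.exists_max fun j => ∑ k, |K j k|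
      exact lt_of_le_of_lt (ciSup_le hj0) (hrow j0)
  · letI : NormedRing (Matrix (Fin M) (Fin M) ℝ) := Matrix.linftyOpNormedRing
    haveI : CompleteSpace (Matrix (Fin M) (Fin M) ℝ) :=
      inferInstanceAs (CompleteSpace (Fin M → Fin M → ℝ))
    have hnorm : ‖K‖ < 1 := by
      rw [Matrix.linfty_opNorm_def]
      rcases isEmpty_or_nonempty (Fin M) with hM | hM
      · simp
      · push_cast
        obtain ⟨j0, hj0⟩ := Finset.exists_max_image Finset.univ
          (fun j => ∑ k, ‖K j k‖₊) Finset.univ_nonempty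
        refine lt_of_le_of_lt (Finset.sup_le fun j _ => hj0.2 j (Finset.mem_univ j)) ?_
        calc ((∑ k, ‖K j0 k‖₊ : NNReal) : ℝ) = ∑ k, |K j0 k| := by
              push_cast; exact Finset.sum_congr rfl fun k _ => by
                simp [Real.norm_eq_abs]
          _ < 1 := hrow j0
    haveI : HasSummableGeomSeries (Matrix (Fin M) (Fin M) ℝ) :=
      @instHasSummableGeomSeriesOfCompleteSpace _ _ this
    exact isUnit_one_sub_of_norm_lt_one hnorm
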